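/- arXiv:2305.17532 — 4 statements merged into one kernel-verified Lean document; each statement's English description precedes it below -/
import Mathlib

section
/- Let R = k[x,y]_{(x,y)} with maximal ideal m = (x,y), I_n = (x^{3n}) and J_n = (x^n · m^{2n}) for n ≥ 1. Then {I_n} and {J_n} are filtrations with I_n ⊆ J_n for all n, the filtration {I_n} satisfies A(1), but {J_n} does not satisfy A(1). -/
open MvPolynomial

noncomputable abbrev mxy (k : Type*) [Field k] : Ideal (MvPolynomial (Fin 2) k) :=
  Ideal.span {X 0, X 1}

noncomputable abbrev Rxy (k : Type*) [Field k] [(mxy k).IsPrime] : Type _ :=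
  Localization.AtPrime (mxy k)

noncomputable abbrev xx (k : Type*) [Field k] [(mxy k).IsPrime] : Rxy k :=
  algebraMap (MvPolynomial (Fin 2) k) (Rxy k) (X 0)

noncomputable abbrev yy (k : Type*) [Field k] [(mxy k).IsPrime] : Rxy k :=
  algebraMap (MvPolynomial (Fin 2) k) (Rxy k) (X 1)

/-- The saturation `I : J^∞ = ⋃ₖ (I : Jᵏ)`. -/
noncomputable def sat {A : Type*} [CommRing A] (I J : Ideal A) : Ideal A :=
  ⨆ n : ℕ, Submodule.colon I ((J ^ n : Ideal A) : Set A)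

/-- The quotient module `S/I` of two ideals (with `I ⊆ S` in the intended use). -/
noncomputable abbrev idealQuot {A : Type*} [CommRing A] (S I : Ideal A) :=
  S ⧸ (Submodule.comap S.subtype I)

/-- The length of a module, expressed as the Krull dimension of its submodule lattice. -/
noncomputable def mlength (R M : Type*) [CommRing R] [AddCommGroup M] [Module R M] : ℕ∞ :=
  WithBot.unbotD 0 (Order.krullDim (Submodule R M))

/-!
Since `x` is a prime element of `R` not dividing `y`, the ideal `(x^{3n})` is already
`m`-saturated: `f y^t ∈ (x^{3n})` forces `x^{3n} ∣ f`. On the other hand `x m² ⊆ J₁`, so `x` lies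
in the saturation of `J₁ ⊆ m²`, whereas `x ∉ m²` because the contraction of `m²` to `k[x,y]`
is `(x,y)²`.
-/

open IsLocalRing

section Saturation

variable {A : Type*} [CommRing A]

theorem colon_pow_le_sat (I J : Ideal A) (t : ℕ) :
    I.colon ((J ^ t : Ideal A) : Set A) ≤ sat I J :=
  le_iSup (fun n : ℕ => I.colon ((J ^ n : Ideal A) : Set A)) t

theorem le_sat (I J : Ideal A) : I ≤ sat I J :=
  Ideal.le_colon.trans (colon_pow_le_sat I J 0)

theorem mem_sat_span_singleton_mul_pow (a : A) (J : Ideal A) (t : ℕ) :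
    a ∈ sat (Ideal.span {a} * J ^ t) J :=
  colon_pow_le_sat _ J t <| Submodule.mem_colon.mpr fun _ hb =>
    Ideal.mul_mem_mul (Ideal.mem_span_singleton_self a) hb

theorem sat_span_prime_pow [IsCancelMulZero A] {p y : A} {J : Ideal A} (hp : Prime p)
    (hy : y ∈ J) (hpy : ¬ p ∣ y) (n : ℕ) :
    sat (Ideal.span {p ^ n}) J = Ideal.span {p ^ n} := by
  refine le_antisymm (iSup_le fun t f hf => ?_) (le_sat _ J)
  have hfy : p ^ n ∣ f * y ^ t := by
    simpa only [smul_eq_mul, Ideal.mem_span_singleton] using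
      Submodule.mem_colon.mp hf _ (Ideal.pow_mem_pow hy t)
  rw [Ideal.mem_span_singleton]
  exact hp.pow_dvd_of_dvd_mul_right n (fun h => hpy (hp.dvd_of_dvd_pow h)) hfy

end Saturation

section LocalizationAtPrime

variable {A : Type*} (S : Type*) [CommRing A] [CommRing S] [Algebra A S] (P : Ideal A)
  [P.IsPrime] [IsLocalization.AtPrime S P] {p : A}

theorem dvd_of_algebraMap_dvd_algebraMap (hp : Prime p) (hpP : p ∈ P) {q : A}
    (h : algebraMap A S p ∣ algebraMap A S q) : p ∣ q := by
  rw [← Ideal.mem_span_singleton, ← Set.image_singleton, ← Ideal.map_span,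
    IsLocalization.algebraMap_mem_map_algebraMap_iff P.primeCompl] at h
  obtain ⟨s, hs, hsq⟩ := h
  rw [Ideal.mem_span_singleton] at hsq
  exact (hp.dvd_or_dvd hsq).resolve_left fun hps => hs (P.mem_of_dvd hps hpP)

theorem prime_algebraMap_of_mem [IsDomain A] (hp : Prime p) (hpP : p ∈ P) :
    Prime (algebraMap A S p) := by
  have hne : algebraMap A S p ≠ 0 :=
    (map_ne_zero_iff _ (IsLocalization.injective S P.primeCompl_le_nonZeroDivisors)).mpr
      hp.ne_zero
  rw [← Ideal.span_singleton_prime hne, ← Set.image_singleton, ← Ideal.map_span]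
  exact IsLocalization.isPrime_of_isPrime_disjoint P.primeCompl S _
    ((Ideal.span_singleton_prime hp.ne_zero).mpr hp)
    (Set.disjoint_left.mpr fun s hs hsp => hs ((P.span_singleton_le_iff_mem.mpr hpP) hsp))

end LocalizationAtPrime

theorem MvPolynomial.idealOfVars_eq_ker_constantCoeff {σ R : Type*} [CommSemiring R] :
    idealOfVars σ R = RingHom.ker (constantCoeff : MvPolynomial σ R →+* R) := by
  ext f
  rw [← pow_one (idealOfVars σ R), mem_pow_idealOfVars_iff', RingHom.mem_ker, constantCoeff_eq]
  simp [Finsupp.degree_eq_zero_iff]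

section Rxy

variable (k : Type*) [Field k]

theorem mxy_eq_idealOfVars : mxy k = idealOfVars (Fin 2) k := by
  unfold mxy idealOfVars
  congr 1
  ext
  simp [Fin.exists_fin_two, eq_comm]

instance isMaximal_mxy : (mxy k).IsMaximal := by
  rw [mxy_eq_idealOfVars, idealOfVars_eq_ker_constantCoeff]
  exact RingHom.ker_isMaximal_of_surjective _ fun c => ⟨C c, constantCoeff_C _ c⟩

variable [(mxy k).IsPrime]

theorem xx_mem_maximalIdeal : xx k ∈ maximalIdeal (Rxy k) := by
  rw [← Localization.AtPrime.map_eq_maximalIdeal]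
  exact Ideal.mem_map_of_mem _ (Ideal.subset_span (by simp))

theorem yy_mem_maximalIdeal : yy k ∈ maximalIdeal (Rxy k) := by
  rw [← Localization.AtPrime.map_eq_maximalIdeal]
  exact Ideal.mem_map_of_mem _ (Ideal.subset_span (by simp))

theorem prime_xx : Prime (xx k) :=
  prime_algebraMap_of_mem (Rxy k) (mxy k) X_prime (Ideal.subset_span (by simp))

theorem not_xx_dvd_yy : ¬ xx k ∣ yy k := fun h => by
  simpa using dvd_of_algebraMap_dvd_algebraMap (Rxy k) (mxy k) X_prime
    (Ideal.subset_span (by simp) : X 0 ∈ mxy k) h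

theorem xx_notMem_maximalIdeal_sq : xx k ∉ maximalIdeal (Rxy k) ^ 2 := fun h => by
  have hX : (X 0 : MvPolynomial (Fin 2) k) ∈ idealOfVars (Fin 2) k ^ 2 := by
    rw [← mxy_eq_idealOfVars, ← IsLocalization.AtPrime.under_maximalIdeal_pow (mxy k) (Rxy k)]
    exact h
  rw [X, monomial_mem_pow_idealOfVars_iff _ _ one_ne_zero, Finsupp.degree_single] at hX
  omega

end Rxy

/-- in `R = k[x,y]_{(x,y)}` with maximal ideal `m`, let `I_n = (x^{3n})` and
`J_n = (x^n)·m^{2n}`.  Then `{I_n}` and `{J_n}` are filtrations with `I_n ⊆ J_n`,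
`{I_n}` satisfies `A(1)` but `{J_n}` does not. -/
theorem stmt3 (k : Type*) [Field k] [(mxy k).IsPrime]
    (I J : ℕ → Ideal (Rxy k))
    (hI : ∀ n, 1 ≤ n → I n = Ideal.span {xx k ^ (3 * n)})
    (hJ : ∀ n, 1 ≤ n →
      J n = Ideal.span {xx k} ^ n * (IsLocalRing.maximalIdeal (Rxy k)) ^ (2 * n)) :
    (∀ m n, 1 ≤ m → 1 ≤ n → I m * I n ≤ I (m + n)) ∧
    (∀ m n, 1 ≤ m → 1 ≤ n → J m * J n ≤ J (m + n)) ∧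
    (∀ n, 1 ≤ n → I n ≤ J n) ∧
    (∀ n, 1 ≤ n →
      sat (I n) (IsLocalRing.maximalIdeal (Rxy k)) ⊓ (IsLocalRing.maximalIdeal (Rxy k)) ^ n
        = I n ⊓ (IsLocalRing.maximalIdeal (Rxy k)) ^ n) ∧
    ¬ (∀ n, 1 ≤ n →
      sat (J n) (IsLocalRing.maximalIdeal (Rxy k)) ⊓ (IsLocalRing.maximalIdeal (Rxy k)) ^ n
        = J n ⊓ (IsLocalRing.maximalIdeal (Rxy k)) ^ n) := by
  have hJ1 : J 1 = Ideal.span {xx k} * maximalIdeal (Rxy k) ^ 2 := by simpa using hJ 1 le_rfl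
  refine ⟨fun a b ha hb => ?_, fun a b ha hb => ?_, fun n hn => ?_, fun n hn => ?_, fun hA => ?_⟩
  · rw [hI a ha, hI b hb, hI (a + b) (by omega), Ideal.span_singleton_mul_span_singleton,
      ← pow_add, mul_add]
  · rw [hJ a ha, hJ b hb, hJ (a + b) (by omega), mul_mul_mul_comm, ← pow_add, ← pow_add, mul_add]
  · rw [hI n hn, hJ n hn, Ideal.span_singleton_le_iff_mem, Ideal.span_singleton_pow,
      show 3 * n = n + 2 * n by ring, pow_add]
    exact Ideal.mul_mem_mul (Ideal.mem_span_singleton_self _)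
      (Ideal.pow_mem_pow (xx_mem_maximalIdeal k) _)
  · rw [hI n hn, sat_span_prime_pow (prime_xx k) (yy_mem_maximalIdeal k) (not_xx_dvd_yy k)]
  · have hx :
        xx k ∈ Ideal.span {xx k} * maximalIdeal (Rxy k) ^ 2 ⊓ maximalIdeal (Rxy k) ^ 1 := by
      rw [← hJ1, ← hA 1 le_rfl, hJ1, pow_one]
      exact ⟨mem_sat_span_singleton_mul_pow _ _ 2, xx_mem_maximalIdeal k⟩
    exact xx_notMem_maximalIdeal_sq k (Ideal.mul_le_right hx.1)
end

section
/- Let R = k[x]_{(x)} and I_n = (x^{⌈nπ⌉}) for n ≥ 1. Then {I_n} is a filtration, and for each fixed n there exists r ∈ ℤ_{>0} with r⌈nπ⌉ ≥ ⌈rnπ⌉ + 1; hence for every f ∈ I_n there is r > 0 with f^r ∈ m_R · I_{rn}. -/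
set_option synthInstance.maxHeartbeats 1000000
set_option maxHeartbeats 2000000

/-- The ideal `(x)` in `k[x]`. -/
noncomputable abbrev mx (k : Type*) [Field k] : Ideal (Polynomial k) :=
  Ideal.span {Polynomial.X}

/-- The local ring `R = k[x]_{(x)}`. -/
noncomputable abbrev Rx (k : Type*) [Field k] [(mx k).IsPrime] : Type _ :=
  Localization.AtPrime (mx k)

/-- The image of `x` in `R = k[x]_{(x)}`. -/
noncomputable abbrev xe (k : Type*) [Field k] [(mx k).IsPrime] : Rx k :=
  algebraMap (Polynomial k) (Rx k) Polynomial.X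

/-!
With `ε = ⌈nπ⌉ - nπ > 0` (π is irrational), `r⌈nπ⌉ = rnπ + rε` while `⌈rnπ⌉ < rnπ + 1`, so any
`r ≥ 1/ε` makes `r⌈nπ⌉` exceed `⌈rnπ⌉`. For `f = g x^{⌈nπ⌉}` this gives
`f^r ∈ (x^{r⌈nπ⌉}) ⊆ (x^{⌈rnπ⌉+1}) = (x)·I_{rn}`, and `x ∈ m_R`.
The filtration property is the subadditivity `⌈(m+n)π⌉ ≤ ⌈mπ⌉ + ⌈nπ⌉`.
-/

theorem Nat.exists_ceil_mul_add_one_le_mul_ceil {K : Type*} [Field K] [LinearOrder K]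
    [IsStrictOrderedRing K] [FloorSemiring K] {α : K} (hα : 0 ≤ α) (hαnat : ∀ m : ℕ, α ≠ m) :
    ∃ r : ℕ, 1 ≤ r ∧ ⌈(r : K) * α⌉₊ + 1 ≤ r * ⌈α⌉₊ := by
  set ε : K := ⌈α⌉₊ - α with hε
  have hεpos : 0 < ε := sub_pos.mpr ((Nat.le_ceil α).lt_of_ne (hαnat _))
  set r := ⌈ε⁻¹⌉₊
  have hrε : 1 ≤ (r : K) * ε := (inv_le_iff_one_le_mul₀ hεpos).mp (Nat.le_ceil _)
  refine ⟨r, Nat.one_le_iff_ne_zero.mpr (Nat.ceil_pos.mpr (inv_pos.mpr hεpos)).ne', ?_⟩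
  suffices (⌈(r : K) * α⌉₊ : K) < r * ⌈α⌉₊ by exact_mod_cast this
  calc (⌈(r : K) * α⌉₊ : K) < r * α + 1 := Nat.ceil_lt_add_one (by positivity)
    _ ≤ r * α + r * ε := by gcongr
    _ = r * ⌈α⌉₊ := by rw [hε]; ring

theorem Ideal.span_singleton_pow_mul_le {R : Type*} [CommSemiring R] (x : R) {a b c : ℕ}
    (h : c ≤ a + b) : span {x ^ a} * span {x ^ b} ≤ span {x ^ c} := by
  rw [span_singleton_mul_span_singleton, ← pow_add, span_singleton_le_span_singleton]
  exact pow_dvd_pow x h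

theorem Ideal.pow_mem_span_singleton_mul_span_singleton_pow {R : Type*} [CommSemiring R]
    {x f : R} {a b r : ℕ} (hf : f ∈ span {x ^ a}) (h : b + 1 ≤ r * a) :
    f ^ r ∈ span {x} * span {x ^ b} := by
  have hfr : f ^ r ∈ span {x ^ (r * a)} := by
    rw [mul_comm, pow_mul, ← span_singleton_pow]
    exact pow_mem_pow hf r
  rw [span_singleton_mul_span_singleton, ← pow_succ']
  exact span_singleton_le_span_singleton.mpr (pow_dvd_pow x h) hfr

theorem xe_mem_maximalIdeal (k : Type*) [Field k] [(mx k).IsPrime] :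
    xe k ∈ IsLocalRing.maximalIdeal (Rx k) :=
  (IsLocalization.AtPrime.to_map_mem_maximal_iff (Rx k) (mx k) _).mpr (Ideal.subset_span rfl)

/-- in `R = k[x]_{(x)}`, the ideals `I_n = (x^{⌈nπ⌉})` form a filtration;
for each fixed `n ≥ 1` there is `r ∈ ℤ_{>0}` with `r⌈nπ⌉ ≥ ⌈rnπ⌉ + 1`; hence every
`f ∈ I_n` satisfies `f^r ∈ m_R · I_{rn}` for some `r > 0`. -/
theorem stmt8 (k : Type*) [Field k] [(mx k).IsPrime]
    (I : ℕ → Ideal (Rx k))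
    (hI : ∀ n, 1 ≤ n → I n = Ideal.span {xe k ^ (⌈(n : ℝ) * Real.pi⌉₊)}) :
    (∀ m n, 1 ≤ m → 1 ≤ n → I m * I n ≤ I (m + n)) ∧
    (∀ n, 1 ≤ n → ∃ r : ℕ, 1 ≤ r ∧
      ⌈((r * n : ℕ) : ℝ) * Real.pi⌉₊ + 1 ≤ r * ⌈(n : ℝ) * Real.pi⌉₊) ∧
    (∀ n, 1 ≤ n → ∀ f ∈ I n, ∃ r : ℕ, 1 ≤ r ∧
      f ^ r ∈ (IsLocalRing.maximalIdeal (Rx k)) * I (r * n)) := by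
  have ceil_gap : ∀ n : ℕ, 1 ≤ n → ∃ r : ℕ, 1 ≤ r ∧
      ⌈((r * n : ℕ) : ℝ) * Real.pi⌉₊ + 1 ≤ r * ⌈(n : ℝ) * Real.pi⌉₊ := by
    intro n hn
    have hirr : Irrational ((n : ℝ) * Real.pi) := irrational_pi.natCast_mul (by omega)
    simpa only [Nat.cast_mul, mul_assoc] using
      Nat.exists_ceil_mul_add_one_le_mul_ceil (by positivity) hirr.ne_nat
  refine ⟨fun m n hm hn => ?_, ceil_gap, fun n hn f hf => ?_⟩
  · rw [hI m hm, hI n hn, hI (m + n) (by omega)]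
    refine Ideal.span_singleton_pow_mul_le _ ?_
    simpa only [Nat.cast_add, add_mul] using Nat.ceil_add_le _ _
  · obtain ⟨r, hr, hgap⟩ := ceil_gap n hn
    refine ⟨r, hr, ?_⟩
    rw [hI (r * n) (Nat.one_le_iff_ne_zero.mpr (by positivity))]
    rw [hI n hn] at hf
    exact Ideal.mul_mono_left ((Ideal.span_singleton_le_iff_mem _).mpr (xe_mem_maximalIdeal k))
      (Ideal.pow_mem_span_singleton_mul_span_singleton_pow hf hgap)
end

section
/- Let R = k[x]_{(x)} and I_n = (x^{⌈nπ⌉}). Then I_n : m_R^∞ = R for all n ≥ 1, and lim_{n→∞} λ_R(R/I_n)/n = lim_{n→∞} ⌈nπ⌉/n = π; that is, the epsilon multiplicity of the filtration {I_n} equals π and is positive. -/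
set_option synthInstance.maxHeartbeats 1000000
set_option maxHeartbeats 2000000

/-!
Since `R = k[x]_{(x)}` is a discrete valuation ring with maximal ideal `(x)`, the ideal
`I_n = (x^{⌈nπ⌉})` is the power `m^{⌈nπ⌉}` of the maximal ideal. Hence `I_n : m^∞ = R`, so
`(I_n : m^∞)/I_n = R/I_n`, whose length in a DVR is the exponent `⌈nπ⌉`; and `⌈nπ⌉/n → π`.
-/

open Filter Topology IsLocalRing

lemma mlength_eq_length (R M : Type*) [CommRing R] [AddCommGroup M] [Module R M] :
    mlength R M = Module.length R M := by
  rw [mlength, ← Module.coe_length, WithBot.unbotD_coe]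

lemma sat_eq_top_of_pow_le {A : Type*} [CommRing A] {I J : Ideal A} {c : ℕ} (h : J ^ c ≤ I) :
    sat I J = ⊤ :=
  eq_top_iff.mpr <| le_iSup_of_le c fun r _ =>
    Submodule.mem_colon.mpr fun _ hs => I.mul_mem_left r (h hs)

lemma length_idealQuot_top {A : Type*} [CommRing A] (I : Ideal A) :
    Module.length A (idealQuot ⊤ I) = Module.length A (A ⧸ I) :=
  (Submodule.Quotient.equiv _ _ Submodule.topEquiv (by ext; simp)).length_eq

lemma tendsto_nat_ceil_natCast_mul_div {R : Type*} [TopologicalSpace R] [Field R] [LinearOrder R]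
    [IsStrictOrderedRing R] [OrderTopology R] [FloorRing R] [Archimedean R] {a : R} (ha : 0 ≤ a) :
    Tendsto (fun n : ℕ => (⌈(n : R) * a⌉₊ : R) / n) atTop (𝓝 a) := by
  simpa only [mul_comm, Function.comp_def] using
    (tendsto_nat_ceil_mul_div_atTop ha).comp tendsto_natCast_atTop_atTop

section Rx

variable (k : Type*) [Field k] [(mx k).IsPrime]

instance : IsDiscreteValuationRing (Rx k) :=
  IsLocalization.AtPrime.isDiscreteValuationRing_of_dedekind_domain (Polynomial k)
    (Ideal.span_singleton_eq_bot.not.mpr Polynomial.X_ne_zero) (Rx k)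

lemma maximalIdeal_Rx_eq_span_xe : maximalIdeal (Rx k) = Ideal.span {xe k} := by
  rw [← Localization.AtPrime.map_eq_maximalIdeal, Ideal.map_span, Set.image_singleton]

lemma span_xe_pow_eq_maximalIdeal_pow (c : ℕ) :
    Ideal.span {xe k ^ c} = maximalIdeal (Rx k) ^ c := by
  rw [maximalIdeal_Rx_eq_span_xe, Ideal.span_singleton_pow]

end Rx

open Filter in
/-- in `R = k[x]_{(x)}` with `I_n = (x^{⌈nπ⌉})`, one has `I_n : m^∞ = R`
for all `n ≥ 1`, and `λ_R(R/I_n)/n = ⌈nπ⌉/n → π`; the epsilon multiplicity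
`ε({I_n}) = limsup λ_R((I_n : m^∞)/I_n)/n` equals `π` and is positive. -/
theorem stmt9 (k : Type*) [Field k] [(mx k).IsPrime]
    (I : ℕ → Ideal (Rx k))
    (hI : ∀ n, 1 ≤ n → I n = Ideal.span {xe k ^ (⌈(n : ℝ) * Real.pi⌉₊)}) :
    (∀ n, 1 ≤ n → sat (I n) (IsLocalRing.maximalIdeal (Rx k)) = ⊤) ∧
    Tendsto (fun n : ℕ => ((mlength (Rx k) (Rx k ⧸ I n)).toNat : ℝ) / n)
      atTop (nhds Real.pi) ∧
    Tendsto (fun n : ℕ => ((⌈(n : ℝ) * Real.pi⌉₊ : ℕ) : ℝ) / n) atTop (nhds Real.pi) ∧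
    Filter.limsup (fun n : ℕ =>
        ((mlength (Rx k)
          (idealQuot (sat (I n) (IsLocalRing.maximalIdeal (Rx k))) (I n))).toNat : ℝ) / n)
      atTop = Real.pi ∧
    0 < Real.pi := by
  have hpow : ∀ n, 1 ≤ n → I n = maximalIdeal (Rx k) ^ ⌈(n : ℝ) * Real.pi⌉₊ := fun n hn => by
    rw [hI n hn, span_xe_pow_eq_maximalIdeal_pow]
  have hsat : ∀ n, 1 ≤ n → sat (I n) (maximalIdeal (Rx k)) = ⊤ := fun n hn =>
    sat_eq_top_of_pow_le (hpow n hn).ge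
  have hlen : ∀ n, 1 ≤ n → Module.length (Rx k) (Rx k ⧸ I n) = ⌈(n : ℝ) * Real.pi⌉₊ :=
    fun n hn => by rw [hpow n hn, IsDiscreteValuationRing.length_quotient_pow_maximalIdeal]
  have hceil := tendsto_nat_ceil_natCast_mul_div Real.pi_pos.le
  refine ⟨hsat, hceil.congr' ?_, hceil, (hceil.congr' ?_).limsup_eq, Real.pi_pos⟩
  · filter_upwards [eventually_ge_atTop 1] with n hn
    rw [mlength_eq_length, hlen n hn, ENat.toNat_natCast]
  · filter_upwards [eventually_ge_atTop 1] with n hn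
    rw [mlength_eq_length, hsat n hn, length_idealQuot_top, hlen n hn, ENat.toNat_natCast]
end

section
/- Let R = k[x,y]_{(x,y)}, I_n = (x^n) and J_n = (x^{n+1}, x^n y). Then the integral closures of the Rees algebras R[{I_n}] and R[{J_n}] in R[t] are distinct. (Proof idea: if they were equal, then since R[{I_n}] = R[xt] is a finitely generated R-algebra and R is Noetherian, by the Artin–Tate lemma R[{J_n}] would be a finitely generated R-algebra; but R[{J_n}] is not finitely generated over R.) -/
/-!
The element `x t` lies in `R[{Iₙ}]`, but it is not integral over `R[{Jₙ}]`. Every element of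
`R[{Jₙ}]` has its degree-`n` coefficient in `xⁿ 𝔪` for `n ≥ 1`, where `𝔪 = (x, y)`, since these
ideals are multiplicative. Reading a monic equation of degree `m` for `x t` in degree `m` then
gives `xᵐ ∈ xᵐ 𝔪`, so `xᵐ = 0` by Nakayama, which is absurd in the domain `R`.
-/

set_option synthInstance.maxHeartbeats 1000000
set_option maxHeartbeats 2000000

open MvPolynomial

/-- The Rees algebra `⊕ₙ Iₙ tⁿ` of a filtration `{Iₙ}`, as a subalgebra of `A[t]`. -/
noncomputable def filtRees {A : Type*} [CommRing A] (I : ℕ → Ideal A) :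
    Subalgebra A (Polynomial A) :=
  Algebra.adjoin A {p : Polynomial A | ∃ n : ℕ, ∃ a ∈ I n, p = Polynomial.C a * Polynomial.X ^ n}

theorem Ideal.span_pow_mul_mul_le {A : Type*} [CommRing A] (a : A) (M : Ideal A) (i j : ℕ) :
    Ideal.span {a ^ i} * M * (Ideal.span {a ^ j} * M) ≤ Ideal.span {a ^ (i + j)} * M := by
  calc Ideal.span {a ^ i} * M * (Ideal.span {a ^ j} * M)
      = Ideal.span {a ^ (i + j)} * (M * M) := by
        rw [pow_add, ← Ideal.span_singleton_mul_span_singleton]; ring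
    _ ≤ Ideal.span {a ^ (i + j)} * M := Ideal.mul_mono_right Ideal.mul_le_left

namespace Polynomial

variable {A : Type*} [CommRing A]

def posCoeffSubalgebra (K : ℕ → Ideal A)
    (hK : ∀ i j, 1 ≤ i → 1 ≤ j → K i * K j ≤ K (i + j)) : Subalgebra A A[X] where
  carrier := {p | ∀ n, 1 ≤ n → p.coeff n ∈ K n}
  zero_mem' n _ := by simp
  one_mem' n hn := by simp [coeff_one, Nat.one_le_iff_ne_zero.mp hn]
  add_mem' hp hq n hn := by simpa only [coeff_add] using add_mem (hp n hn) (hq n hn)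
  algebraMap_mem' r n hn := by simp [coeff_C, Nat.one_le_iff_ne_zero.mp hn]
  mul_mem' {p q} hp hq n hn := by
    rw [coeff_mul]
    refine Ideal.sum_mem _ fun ⟨i, j⟩ hij => ?_
    rw [Finset.HasAntidiagonal.mem_antidiagonal] at hij
    dsimp only
    obtain rfl | hi := Nat.eq_zero_or_pos i
    · rw [zero_add] at hij
      exact Ideal.mul_mem_left _ _ (hij ▸ hq n hn)
    obtain rfl | hj := Nat.eq_zero_or_pos j
    · rw [add_zero] at hij
      exact Ideal.mul_mem_right _ _ (hij ▸ hp n hn)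
    exact hij ▸ hK i j hi hj (Ideal.mul_mem_mul (hp i hi) (hq j hj))

theorem filtRees_le_posCoeffSubalgebra {J K : ℕ → Ideal A}
    (hK : ∀ i j, 1 ≤ i → 1 ≤ j → K i * K j ≤ K (i + j)) (hJK : ∀ n, 1 ≤ n → J n ≤ K n) :
    filtRees J ≤ posCoeffSubalgebra K hK := by
  refine Algebra.adjoin_le ?_
  rintro _ ⟨j, a, ha, rfl⟩ n hn
  rw [coeff_C_mul_X_pow]
  split_ifs with h
  · exact h ▸ hJK j (h ▸ hn) ha
  · exact zero_mem _

theorem exists_pow_mem_span_pow_mul_of_isIntegral {J : ℕ → Ideal A} (a : A) (M : Ideal A)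
    (hJ : ∀ n, 1 ≤ n → J n ≤ Ideal.span {a ^ n} * M)
    (hint : IsIntegral (filtRees J) (C a * X)) :
    ∃ m, a ^ m ∈ Ideal.span {a ^ m} * M := by
  obtain ⟨q, hq, hq0⟩ := hint
  have hsum : (C a * X) ^ q.natDegree +
      ∑ i ∈ Finset.range q.natDegree, (q.coeff i : A[X]) * (C a * X) ^ i = 0 := by
    have h := congrArg (aeval (C a * X)) hq.as_sum
    rw [aeval_def, hq0] at h
    simpa using h.symm
  generalize q.natDegree = m at hsum
  have hcoeff (c : A[X]) {i : ℕ} (hi : i ≤ m) :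
      (c * (C a * X) ^ i).coeff m = a ^ i * c.coeff (m - i) := by
    rw [mul_pow, ← C_pow, mul_left_comm, coeff_C_mul, coeff_mul_X_pow', if_pos hi]
  have hlower : ∀ i ∈ Finset.range m,
      ((q.coeff i : A[X]) * (C a * X) ^ i).coeff m ∈ Ideal.span {a ^ m} * M := by
    intro i hi
    rw [Finset.mem_range] at hi
    have hc := filtRees_le_posCoeffSubalgebra (fun i j _ _ => Ideal.span_pow_mul_mul_le a M i j)
      hJ (q.coeff i).2 (m - i) (by omega)
    have hspan : Ideal.span {a ^ i} * (Ideal.span {a ^ (m - i)} * M) = Ideal.span {a ^ m} * M := by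
      rw [← mul_assoc, Ideal.span_singleton_mul_span_singleton, ← pow_add,
        Nat.add_sub_cancel' hi.le]
    rw [hcoeff _ hi.le, ← hspan]
    exact Ideal.mul_mem_mul (Ideal.mem_span_singleton_self _) hc
  have htop : ((C a * X) ^ m).coeff m = a ^ m := by simpa using hcoeff 1 le_rfl
  have heq := congrArg (coeff · m) hsum
  simp only [coeff_add, finsetSum_coeff, htop, coeff_zero] at heq
  exact ⟨m, (Submodule.add_mem_iff_left _ (Ideal.sum_mem _ hlower)).mp (heq ▸ zero_mem _)⟩

end Polynomial

theorem eq_zero_of_mem_span_singleton_mul {A : Type*} [CommRing A] {M : Ideal A}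
    (hM : M ≤ (⊥ : Ideal A).jacobson) {b : A} (hb : b ∈ Ideal.span {b} * M) : b = 0 := by
  have hle : Ideal.span {b} ≤ M • Ideal.span {b} := by
    rw [Ideal.smul_eq_mul, mul_comm, Ideal.span_singleton_le_iff_mem]
    exact hb
  exact Ideal.span_singleton_eq_bot.mp
    (Submodule.eq_bot_of_le_smul_of_le_jacobson_bot M _ (Submodule.fg_span_singleton b) hle hM)

theorem xx_ne_zero (k : Type*) [Field k] [(mxy k).IsPrime] : xx k ≠ 0 := by
  have hinj := IsLocalization.injective (Rxy k) (mxy k).primeCompl_le_nonZeroDivisors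
  exact (map_ne_zero_iff _ hinj).mpr (X_ne_zero 0)

theorem span_xx_yy_le_jacobson (k : Type*) [Field k] [(mxy k).IsPrime] :
    Ideal.span {xx k, yy k} ≤ (⊥ : Ideal (Rxy k)).jacobson := by
  refine le_trans ?_ (IsLocalRing.maximalIdeal_le_jacobson _)
  rw [Ideal.span_le, Set.insert_subset_iff, Set.singleton_subset_iff]
  exact ⟨(IsLocalization.AtPrime.to_map_mem_maximal_iff _ (mxy k) _).mpr
      (Ideal.subset_span (by simp)),
    (IsLocalization.AtPrime.to_map_mem_maximal_iff _ (mxy k) _).mpr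
      (Ideal.subset_span (by simp))⟩

theorem stmt18_general (k : Type*) [Field k] [(mxy k).IsPrime]
    (I J : ℕ → Ideal (Rxy k))
    (hI : ∀ n, 1 ≤ n → I n = Ideal.span {xx k ^ n})
    (hJ : ∀ n, 1 ≤ n → J n = Ideal.span {xx k ^ (n + 1), xx k ^ n * yy k}) :
    ((integralClosure (↥(filtRees I)) (Polynomial (Rxy k)) : Set (Polynomial (Rxy k)))
      ≠ (integralClosure (↥(filtRees J)) (Polynomial (Rxy k)) : Set (Polynomial (Rxy k)))) := by
  intro heq
  have hxt : Polynomial.C (xx k) * Polynomial.X ∈ filtRees I :=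
    Algebra.subset_adjoin ⟨1, xx k, by simp [hI 1 le_rfl], by simp⟩
  have hint : IsIntegral (filtRees J) (Polynomial.C (xx k) * Polynomial.X) := by
    have := (integralClosure (filtRees I) (Polynomial (Rxy k))).algebraMap_mem ⟨_, hxt⟩
    rwa [← SetLike.mem_coe, heq] at this
  have hJle (n : ℕ) (hn : 1 ≤ n) : J n ≤ Ideal.span {xx k ^ n} * Ideal.span {xx k, yy k} := by
    rw [hJ n hn, Ideal.span_le, Set.insert_subset_iff, Set.singleton_subset_iff, pow_succ]
    exact ⟨Ideal.mul_mem_mul (Ideal.mem_span_singleton_self _) (Ideal.subset_span (by simp)),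
      Ideal.mul_mem_mul (Ideal.mem_span_singleton_self _) (Ideal.subset_span (by simp))⟩
  obtain ⟨m, hm⟩ := Polynomial.exists_pow_mem_span_pow_mul_of_isIntegral _ _ hJle hint
  exact pow_ne_zero m (xx_ne_zero k)
    (eq_zero_of_mem_span_singleton_mul (span_xx_yy_le_jacobson k) hm)

/-- in `R = k[x,y]_{(x,y)}` with `I_n = (xⁿ)` and `J_n = (x^{n+1}, xⁿy)`,
the integral closures of the Rees algebras `R[{I_n}]` and `R[{J_n}]` in `R[t]` are
distinct. -/
theorem stmt18 (k : Type*) [Field k] [(mxy k).IsPrime]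
    (I J : ℕ → Ideal (Rxy k)) (hI0 : I 0 = ⊤) (hJ0 : J 0 = ⊤)
    (hI : ∀ n, 1 ≤ n → I n = Ideal.span {xx k ^ n})
    (hJ : ∀ n, 1 ≤ n → J n = Ideal.span {xx k ^ (n + 1), xx k ^ n * yy k}) :
    ((integralClosure (↥(filtRees I)) (Polynomial (Rxy k)) : Set (Polynomial (Rxy k)))
      ≠ (integralClosure (↥(filtRees J)) (Polynomial (Rxy k)) : Set (Polynomial (Rxy k)))) :=
  stmt18_general k I J hI hJ
end
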